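/- arXiv:math/9911194 — 3 statements merged into one kernel-verified Lean document; each statement's English description precedes it below -/
import Mathlib

section
/- For all complex numbers m and all complex colour parameters λ, μ, ν, the coloured Jordanian R-matrices R_m^{λ,μ} satisfy the coloured quantum Yang–Baxter equation R₁₂^{λ,μ} * R₁₃^{λ,ν} * R₂₃^{μ,ν} = R₂₃^{μ,ν} * R₁₃^{λ,ν} * R₁₂^{λ,μ}. -/
noncomputable section

open Matrix

/-- The coloured Jordanian `R`-matrix `R_m^{λ,μ}`, indexed by `Fin 2 × Fin 2`
(indices `0,1` correspond to the paper's `1,2`). -/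
def RcolJ (m l μ : ℂ) : Matrix (Fin 2 × Fin 2) (Fin 2 × Fin 2) ℂ :=
  fun p q =>
    if p = q then 1
    else if p = (0, 0) ∧ q = (0, 1) then -(m * (1 - 2 * l))
    else if p = (0, 0) ∧ q = (1, 0) then m * (1 - 2 * μ)
    else if p = (0, 0) ∧ q = (1, 1) then m ^ 2 * (1 - 4 * l * μ)
    else if p = (0, 1) ∧ q = (1, 1) then -(m * (1 + 2 * μ))
    else if p = (1, 0) ∧ q = (1, 1) then m * (1 + 2 * l)
    else 0

/-- Leg embedding `R₁₂` acting on the first two tensor factors. -/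
def leg12 {n : ℕ} (R : Matrix (Fin n × Fin n) (Fin n × Fin n) ℂ) :
    Matrix (Fin n × Fin n × Fin n) (Fin n × Fin n × Fin n) ℂ :=
  fun p q => if p.2.2 = q.2.2 then R (p.1, p.2.1) (q.1, q.2.1) else 0

/-- Leg embedding `R₁₃` acting on the first and third tensor factors. -/
def leg13 {n : ℕ} (R : Matrix (Fin n × Fin n) (Fin n × Fin n) ℂ) :
    Matrix (Fin n × Fin n × Fin n) (Fin n × Fin n × Fin n) ℂ :=
  fun p q => if p.2.1 = q.2.1 then R (p.1, p.2.2) (q.1, q.2.2) else 0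

/-- Leg embedding `R₂₃` acting on the last two tensor factors. -/
def leg23 {n : ℕ} (R : Matrix (Fin n × Fin n) (Fin n × Fin n) ℂ) :
    Matrix (Fin n × Fin n × Fin n) (Fin n × Fin n × Fin n) ℂ :=
  fun p q => if p.1 = q.1 then R (p.2.1, p.2.2) (q.2.1, q.2.2) else 0

section LegProducts

variable {n : ℕ} (R S T : Matrix (Fin n × Fin n) (Fin n × Fin n) ℂ)

theorem leg12_mul_leg13_mul_leg23_apply (i j k i' j' k' : Fin n) :
    (leg12 R * leg13 S * leg23 T) (i, j, k) (i', j', k') =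
      ∑ a, ∑ b, ∑ c, R (i, j) (a, b) * S (a, k) (i', c) * T (b, c) (j', k') := by
  simp only [Matrix.mul_apply, leg12, leg13, leg23, mul_ite, ite_mul, zero_mul, mul_zero,
    Fintype.sum_prod_type, Finset.sum_ite_irrel, Finset.sum_ite_eq, Finset.sum_ite_eq',
    Finset.mem_univ, ↓reduceIte, Finset.sum_const_zero, Prod.mk.eta, Finset.sum_mul]
  exact (Finset.sum_congr rfl fun _ _ => Finset.sum_comm).trans Finset.sum_comm

theorem leg23_mul_leg13_mul_leg12_apply (i j k i' j' k' : Fin n) :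
    (leg23 T * leg13 S * leg12 R) (i, j, k) (i', j', k') =
      ∑ a, ∑ b, ∑ c, T (j, k) (b, c) * S (i, c) (a, k') * R (a, b) (i', j') := by
  simp [Matrix.mul_apply, leg12, leg13, leg23, Fintype.sum_prod_type, Finset.sum_mul]

end LegProducts

/-- for all complex `m` and colours `λ, μ, ν`, the coloured Jordanian
`R`-matrices `R_m^{λ,μ}` satisfy the coloured quantum Yang–Baxter equation. -/
theorem RcolJ_CQYBE (m l μ ν : ℂ) :
    leg12 (RcolJ m l μ) * leg13 (RcolJ m l ν) * leg23 (RcolJ m μ ν) =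
      leg23 (RcolJ m μ ν) * leg13 (RcolJ m l ν) * leg12 (RcolJ m l μ) := by
  ext ⟨i, j, k⟩ ⟨i', j', k'⟩
  rw [leg12_mul_leg13_mul_leg23_apply, leg23_mul_leg13_mul_leg12_apply]
  revert i j k i' j' k'
  simp only [Fin.forall_fin_two, Fin.sum_univ_two, RcolJ, Prod.mk.injEq, zero_ne_one, one_ne_zero,
    and_true, true_and, and_false, false_and, and_self, ↓reduceIte, one_mul, mul_one, mul_zero,
    zero_mul, add_zero, zero_add]
  and_intros <;> ring
end
end

section
/- For all complex numbers m and all complex colour parameters λ, μ, the coloured Jordanian R-matrix R_m^{λ,μ} is colour-triangular: R_m^{λ,μ} * (R_m^{μ,λ})₂₁ = 1, where for a matrix R indexed by (Fin 2 × Fin 2), R₂₁ is defined by R₂₁((i,j),(k,l)) = R((j,i),(l,k)); equivalently R_m^{λ,μ} = ((R_m^{μ,λ})₂₁)⁻¹. -/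
/-! Both factors are unipotent and upper triangular for the lexicographic order on
`Fin 2 × Fin 2`, so the product is the identity once its off-diagonal entries vanish. These are
polynomial identities in `m, λ, μ`; the only one with content is the corner entry, where
`2 m² (1 - 4λμ) = m (1 - 2λ) · m (1 + 2μ) + m (1 - 2μ) · m (1 + 2λ)`. -/

noncomputable section

open Matrix

/-- `R₂₁`, obtained from `R` by swapping the two tensor factors in rows and columns. -/
def R21 (R : Matrix (Fin 2 × Fin 2) (Fin 2 × Fin 2) ℂ) :
    Matrix (Fin 2 × Fin 2) (Fin 2 × Fin 2) ℂ :=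
  fun p q => R (p.2, p.1) (q.2, q.1)

theorem RcolJ_mul_R21_RcolJ (m l μ : ℂ) : RcolJ m l μ * R21 (RcolJ m μ l) = 1 := by
  ext ⟨i, j⟩ ⟨k, k'⟩
  fin_cases i <;> fin_cases j <;> fin_cases k <;> fin_cases k' <;>
    simp [mul_apply, one_apply, Fintype.sum_prod_type, Fin.sum_univ_two, RcolJ, R21]
  ring

/-- the coloured Jordanian `R`-matrix is colour-triangular:
`R_m^{λ,μ} * (R_m^{μ,λ})₂₁ = 1`, equivalently `R_m^{λ,μ} = ((R_m^{μ,λ})₂₁)⁻¹`. -/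
theorem RcolJ_colour_triangular (m l μ : ℂ) :
    RcolJ m l μ * R21 (RcolJ m μ l) = 1 ∧ RcolJ m l μ = (R21 (RcolJ m μ l))⁻¹ :=
  ⟨RcolJ_mul_R21_RcolJ m l μ, (inv_eq_left_inv (RcolJ_mul_R21_RcolJ m l μ)).symm⟩
end
end

section
/- For all complex numbers m and all complex colour parameters k, k', k'', the coloured Jordanian R-matrices R_m^{k,k'} satisfy the coloured quantum Yang–Baxter equation R₁₂(m; k, k') * R₁₃(m; k, k'') * R₂₃(m; k', k'') = R₂₃(m; k', k'') * R₁₃(m; k, k'') * R₁₂(m; k, k'). -/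
noncomputable section

open Matrix

/-- The coloured Jordanian `R`-matrix `R_m^{k,k'}` of the coloured extension
`G_{m,k,k'}` of `G_{m,k}`, indexed by `Fin 3 × Fin 3` (indices `0,1,2` correspond to
the paper's `1,2,3`). -/
def Rmkk (m k k' : ℂ) : Matrix (Fin 3 × Fin 3) (Fin 3 × Fin 3) ℂ :=
  fun p q =>
    if p = q then 1
    else if p = (0, 0) ∧ q = (0, 1) then -m
    else if p = (0, 0) ∧ q = (1, 0) then m
    else if p = (0, 0) ∧ q = (1, 1) then m ^ 2
    else if p = (0, 1) ∧ q = (1, 1) then -m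
    else if p = (1, 0) ∧ q = (1, 1) then m
    else if p = (0, 2) ∧ q = (1, 2) then -k'
    else if p = (2, 0) ∧ q = (2, 1) then k
    else 0

set_option maxHeartbeats 2000000

lemma Rmkk_eq (m a b : ℂ) : Rmkk m a b = 1 +
    ((-m) • single ((0:Fin 3),(0:Fin 3)) (0,1) (1:ℂ) + m • single (0,0) (1,0) 1 +
     m^2 • single (0,0) (1,1) 1 + (-m) • single (0,1) (1,1) 1 +
     m • single (1,0) (1,1) 1 + (-b) • single (0,2) (1,2) 1 +
     a • single (2,0) (2,1) 1) := by
  ext ⟨i,j⟩ ⟨i',j'⟩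
  fin_cases i <;> fin_cases j <;> fin_cases i' <;> fin_cases j' <;>
  · simp only [Matrix.add_apply, Matrix.smul_apply, Matrix.one_apply, Rmkk,
      Matrix.single, Matrix.of_apply, smul_eq_mul]
    simp (config := { decide := true }) only [ite_true, ite_false, if_true, if_false]
    norm_num

lemma leg12_add (A B : Matrix (Fin 3 × Fin 3) (Fin 3 × Fin 3) ℂ) :
    leg12 (A + B) = leg12 A + leg12 B := by
  ext p q; by_cases h : p.2.2 = q.2.2 <;> simp [leg12, h]

lemma leg12_smul (c : ℂ) (A : Matrix (Fin 3 × Fin 3) (Fin 3 × Fin 3) ℂ) :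
    leg12 (c • A) = c • leg12 A := by
  ext p q; by_cases h : p.2.2 = q.2.2 <;> simp [leg12, h]

lemma leg12_one : leg12 (1 : Matrix (Fin 3 × Fin 3) (Fin 3 × Fin 3) ℂ) = 1 := by
  ext ⟨a,b,c⟩ ⟨d,e,f⟩
  by_cases h : c = f <;> simp [leg12, Matrix.one_apply, Prod.ext_iff, h]

lemma leg12_sb (p q : Fin 3 × Fin 3) (c : ℂ) :
    leg12 (single p q c) =
      single (p.1, p.2, (0:Fin 3)) (q.1, q.2, 0) c +
      single (p.1, p.2, 1) (q.1, q.2, 1) c +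
      single (p.1, p.2, 2) (q.1, q.2, 2) c := by
  ext ⟨a,b,x⟩ ⟨d,e,y⟩
  fin_cases x <;> fin_cases y <;>
    simp (config := { decide := true }) [leg12, Matrix.single, Matrix.of_apply,
      Prod.ext_iff]

lemma leg13_add (A B : Matrix (Fin 3 × Fin 3) (Fin 3 × Fin 3) ℂ) :
    leg13 (A + B) = leg13 A + leg13 B := by
  ext p q; by_cases h : p.2.1 = q.2.1 <;> simp [leg13, h]

lemma leg13_smul (c : ℂ) (A : Matrix (Fin 3 × Fin 3) (Fin 3 × Fin 3) ℂ) :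
    leg13 (c • A) = c • leg13 A := by
  ext p q; by_cases h : p.2.1 = q.2.1 <;> simp [leg13, h]

lemma leg13_one : leg13 (1 : Matrix (Fin 3 × Fin 3) (Fin 3 × Fin 3) ℂ) = 1 := by
  ext ⟨a,b,c⟩ ⟨d,e,f⟩
  by_cases h : b = e <;> simp [leg13, Matrix.one_apply, Prod.ext_iff, h] <;> tauto

lemma leg13_sb (p q : Fin 3 × Fin 3) (c : ℂ) :
    leg13 (single p q c) =
      single (p.1, (0:Fin 3), p.2) (q.1, 0, q.2) c +
      single (p.1, 1, p.2) (q.1, 1, q.2) c +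
      single (p.1, 2, p.2) (q.1, 2, q.2) c := by
  ext ⟨a,x,b⟩ ⟨d,y,e⟩
  fin_cases x <;> fin_cases y <;>
    simp (config := { decide := true }) [leg13, Matrix.single, Matrix.of_apply,
      Prod.ext_iff] <;> tauto

lemma leg23_add (A B : Matrix (Fin 3 × Fin 3) (Fin 3 × Fin 3) ℂ) :
    leg23 (A + B) = leg23 A + leg23 B := by
  ext p q; by_cases h : p.1 = q.1 <;> simp [leg23, h]

lemma leg23_smul (c : ℂ) (A : Matrix (Fin 3 × Fin 3) (Fin 3 × Fin 3) ℂ) :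
    leg23 (c • A) = c • leg23 A := by
  ext p q; by_cases h : p.1 = q.1 <;> simp [leg23, h]

lemma leg23_one : leg23 (1 : Matrix (Fin 3 × Fin 3) (Fin 3 × Fin 3) ℂ) = 1 := by
  ext ⟨a,b,c⟩ ⟨d,e,f⟩
  by_cases h : a = d <;> simp [leg23, Matrix.one_apply, Prod.ext_iff, h] <;> tauto

lemma leg23_sb (p q : Fin 3 × Fin 3) (c : ℂ) :
    leg23 (single p q c) =
      single ((0:Fin 3), p.1, p.2) (0, q.1, q.2) c +
      single (1, p.1, p.2) (1, q.1, q.2) c +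
      single (2, p.1, p.2) (2, q.1, q.2) c := by
  ext ⟨x,a,b⟩ ⟨y,d,e⟩
  fin_cases x <;> fin_cases y <;>
    simp (config := { decide := true }) [leg23, Matrix.single, Matrix.of_apply,
      Prod.ext_iff] <;> tauto

lemma sb_mul (i j p q : Fin 3 × Fin 3 × Fin 3) (a b : ℂ) :
    single i j a * single p q b =
      if j = p then single i q (a * b) else 0 := by
  by_cases h : j = p
  · subst h; rw [if_pos rfl, Matrix.single_mul_single_same]
  · rw [if_neg h]; exact Matrix.single_mul_single_of_ne (h := h) ..

/-- for all complex `m` and colours `k, k', k''`, the coloured Jordanian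
`R`-matrices `R_m^{k,k'}` satisfy the coloured quantum Yang–Baxter equation. -/
theorem Rmkk_CQYBE (m k k' k'' : ℂ) :
    leg12 (Rmkk m k k') * leg13 (Rmkk m k k'') * leg23 (Rmkk m k' k'') =
      leg23 (Rmkk m k' k'') * leg13 (Rmkk m k k'') * leg12 (Rmkk m k k') := by
  rw [Rmkk_eq m k k', Rmkk_eq m k k'', Rmkk_eq m k' k'']
  simp only [leg12_add, leg12_smul, leg12_one, leg12_sb,
    leg13_add, leg13_smul, leg13_one, leg13_sb,
    leg23_add, leg23_smul, leg23_one, leg23_sb]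
  simp (config := { decide := true }) only [mul_add, add_mul, smul_mul_assoc, mul_smul_comm,
    smul_smul, one_mul, mul_one, sb_mul, smul_zero, mul_zero, zero_mul, add_zero, zero_add,
    smul_ite, ite_true, ite_false, if_true, if_false, smul_add]
  module
end
end
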